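/- The crossed H-module (Yetter–Drinfeld) compatibility between the action ▷ and the pushout coaction Δ_L = (d⊗id)Δ, namely d(h_(1)▷a_(1)) ⊗ (h_(2)▷a_(2)) = h_(1) d(a_(1)) S(h_(2)) ⊗ (h_(3)▷a_(2)) in H⊗A for all h ∈ H and a ∈ A, holds if and only if d(h▷a) = h_(1) d(a) S(h_(2)) for all h ∈ H, a ∈ A. (Proposition 2.2, part (2).) -/

import Mathlib

/-!
Both sides of the Yetter–Drinfeld identity have the form `(P ⊗ ▷) ∘ Δ` for the tensor-product
coalgebra `H ⊗ A`: the left side with `P = d ∘ ▷`, the right side, after coassociativity of `H`,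
with `P (h ⊗ a) = h₁ d(a) S(h₂)`. Because `ε (h ▷ a) = ε h ε a`, applying `ε` to the second factor
of `(P ⊗ ▷) ∘ Δ` recovers `P`, so the two sides agree exactly when the two maps `P` do.
-/

open TensorProduct

noncomputable section

variable (k A H : Type*) [Field k] [Ring A] [Ring H]
  [HopfAlgebra k A] [HopfAlgebra k H]

/-- `t(a⊗h) = d(a)h`. -/
def tmap (d : A →ₗ[k] H) : A ⊗[k] H →ₗ[k] H :=
  LinearMap.mul' k H ∘ₗ map d LinearMap.id

/-- `s(a⊗h) = ε(a)h`. -/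
def smap : A ⊗[k] H →ₗ[k] H :=
  (TensorProduct.lid k H).toLinearMap ∘ₗ map (Coalgebra.counit : A →ₗ[k] k) LinearMap.id

/-- `i(h) = 1⊗h`. -/
def imap : H →ₗ[k] A ⊗[k] H := TensorProduct.mk k A H 1

/-- The tensor-product coproduct `Δ(a⊗h) = (a₁⊗h₁) ⊗ (a₂⊗h₂)` on `H1 = A ⊗ H`. -/
def comul1 : A ⊗[k] H →ₗ[k] (A ⊗[k] H) ⊗[k] (A ⊗[k] H) :=
  (tensorTensorTensorComm k A A H H).toLinearMap ∘ₗ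
    map (Coalgebra.comul : A →ₗ[k] A ⊗[k] A) (Coalgebra.comul : H →ₗ[k] H ⊗[k] H)

/-- The tensor-product counit `ε(a⊗h) = ε(a)ε(h)` on `H1 = A ⊗ H`. -/
def counit1 : A ⊗[k] H →ₗ[k] k :=
  (TensorProduct.lid k k).toLinearMap ∘ₗ
    map (Coalgebra.counit : A →ₗ[k] k) (Coalgebra.counit : H →ₗ[k] k)

/-- The left coaction `DL = (t⊗id)Δ`. -/
def DLmap (d : A →ₗ[k] H) : A ⊗[k] H →ₗ[k] H ⊗[k] (A ⊗[k] H) :=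
  map (tmap k A H d) LinearMap.id ∘ₗ comul1 k A H

/-- The right coaction `DR = (id⊗s)Δ`. -/
def DRmap : A ⊗[k] H →ₗ[k] (A ⊗[k] H) ⊗[k] H :=
  map LinearMap.id (smap k A H) ∘ₗ comul1 k A H

/-- The second product `(a⊗h)∘(b⊗g) = ε(h) ab ⊗ g`. -/
def circ : (A ⊗[k] H) ⊗[k] (A ⊗[k] H) →ₗ[k] A ⊗[k] H :=
  map (LinearMap.mul' k A)
      ((TensorProduct.lid k H).toLinearMap ∘ₗ map (Coalgebra.counit : H →ₗ[k] k) LinearMap.id)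
    ∘ₗ (tensorTensorTensorComm k A H A H).toLinearMap

/-- The quantum groupoid antipode `𝒮(a⊗h) = S(a₁) ⊗ d(a₂)h`. -/
def SS (d : A →ₗ[k] H) : A ⊗[k] H →ₗ[k] A ⊗[k] H :=
  map (HopfAlgebra.antipode (R := k) : A →ₗ[k] A) (tmap k A H d)
    ∘ₗ (TensorProduct.assoc k A A H).toLinearMap
    ∘ₗ map (Coalgebra.comul : A →ₗ[k] A ⊗[k] A) LinearMap.id

/-- The smash product multiplication `(a⊗h)(b⊗g) = a(h₁▷b) ⊗ h₂g`. -/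
def smashMul (act : H ⊗[k] A →ₗ[k] A) :
    (A ⊗[k] H) ⊗[k] (A ⊗[k] H) →ₗ[k] A ⊗[k] H :=
  map (LinearMap.mul' k A) LinearMap.id
  ∘ₗ (TensorProduct.assoc k A A H).symm.toLinearMap
  ∘ₗ map LinearMap.id
      (map act (LinearMap.mul' k H)
        ∘ₗ (tensorTensorTensorComm k H H A H).toLinearMap)
  ∘ₗ (TensorProduct.assoc k A (H ⊗[k] H) (A ⊗[k] H)).toLinearMap
  ∘ₗ map (map LinearMap.id (Coalgebra.comul : H →ₗ[k] H ⊗[k] H)) LinearMap.id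

/-- The cotensor product `H1□H1`. -/
def cot (d : A →ₗ[k] H) : Set ((A ⊗[k] H) ⊗[k] (A ⊗[k] H)) :=
  {x | (TensorProduct.assoc k (A ⊗[k] H) H (A ⊗[k] H)).toLinearMap
        (map (DRmap k A H) LinearMap.id x) = map LinearMap.id (DLmap k A H d) x}

/-- A Hopf (algebra) precrossed module. -/
structure HopfPrecrossedModule (act : H ⊗[k] A →ₗ[k] A) (d : A →ₗ[k] H) : Prop where
  /-- `(hg)▷a = h▷(g▷a)` -/
  act_mul : ∀ (h g : H) (a : A), act ((h * g) ⊗ₜ[k] a) = act (h ⊗ₜ[k] act (g ⊗ₜ[k] a))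
  /-- `1▷a = a` -/
  act_one : ∀ a : A, act ((1 : H) ⊗ₜ[k] a) = a
  /-- `h▷(ab) = (h₁▷a)(h₂▷b)` -/
  act_mul_alg : act ∘ₗ map LinearMap.id (LinearMap.mul' k A)
      = LinearMap.mul' k A ∘ₗ map act act
          ∘ₗ (tensorTensorTensorComm k H H A A).toLinearMap
          ∘ₗ map (Coalgebra.comul : H →ₗ[k] H ⊗[k] H) LinearMap.id
  /-- `h▷1 = ε(h)1` -/
  act_unit : ∀ h : H, act (h ⊗ₜ[k] (1 : A)) = (Coalgebra.counit h : k) • (1 : A)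
  /-- `Δ(h▷a) = (h₁▷a₁)⊗(h₂▷a₂)` -/
  act_comul : (Coalgebra.comul : A →ₗ[k] A ⊗[k] A) ∘ₗ act
      = map act act ∘ₗ (tensorTensorTensorComm k H H A A).toLinearMap
          ∘ₗ map (Coalgebra.comul : H →ₗ[k] H ⊗[k] H) (Coalgebra.comul : A →ₗ[k] A ⊗[k] A)
  /-- `ε(h▷a) = ε(h)ε(a)` -/
  act_counit : ∀ (h : H) (a : A),
      (Coalgebra.counit (act (h ⊗ₜ[k] a)) : k) = Coalgebra.counit h * Coalgebra.counit a
  /-- `h₁ ⊗ (h₂▷a) = h₂ ⊗ (h₁▷a)` -/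
  act_cocomm : map LinearMap.id act ∘ₗ (TensorProduct.assoc k H H A).toLinearMap
        ∘ₗ map (Coalgebra.comul : H →ₗ[k] H ⊗[k] H) LinearMap.id
      = map LinearMap.id act ∘ₗ (TensorProduct.assoc k H H A).toLinearMap
        ∘ₗ map ((TensorProduct.comm k H H).toLinearMap
              ∘ₗ (Coalgebra.comul : H →ₗ[k] H ⊗[k] H)) LinearMap.id
  /-- `d` is multiplicative -/
  d_mul : ∀ a b : A, d (a * b) = d a * d b
  /-- `d(1) = 1` -/
  d_one : d 1 = 1
  /-- `d` is comultiplicative -/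
  d_comul : (Coalgebra.comul : H →ₗ[k] H ⊗[k] H) ∘ₗ d
      = map d d ∘ₗ (Coalgebra.comul : A →ₗ[k] A ⊗[k] A)
  /-- `ε∘d = ε` -/
  d_counit : (Coalgebra.counit : H →ₗ[k] k) ∘ₗ d = (Coalgebra.counit : A →ₗ[k] k)

open Coalgebra

section Injectivity

variable {k C D M : Type*} [CommSemiring k] [AddCommMonoid C] [Module k C] [Coalgebra k C]
  [AddCommMonoid D] [Module k D] [Coalgebra k D] [AddCommMonoid M] [Module k M]

theorem map_comp_comul_injective {f : C →ₗ[k] D} (hf : counit ∘ₗ f = counit) :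
    Function.Injective fun P : C →ₗ[k] M => map P f ∘ₗ comul := by
  have recover (P : C →ₗ[k] M) : (TensorProduct.rid k M).toLinearMap
      ∘ₗ (counit : D →ₗ[k] k).lTensor M ∘ₗ map P f ∘ₗ comul = P := by
    rw [← LinearMap.comp_assoc _ (map P f), LinearMap.lTensor_comp_map, hf,
      ← LinearMap.rTensor_comp_lTensor, LinearMap.comp_assoc, lTensor_counit_comp_comul]
    ext
    simp
  intro P Q hPQ
  rw [← recover P, ← recover Q]
  exact congrArg _ (congrArg _ hPQ)

end Injectivity

section Adjoint

variable {k A H N : Type*} [CommSemiring k] [AddCommMonoid A] [Module k A]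
  [Semiring H] [HopfAlgebra k H] [AddCommMonoid N] [Module k N]

variable (k) in
/-- `h ⊗ a ↦ h₁ d(a) S(h₂)`: the adjoint action of `H` on itself, precomposed with `d`. -/
def adjointComp (d : A →ₗ[k] H) : H ⊗[k] A →ₗ[k] H :=
  LinearMap.mul' k H
    ∘ₗ map LinearMap.id (LinearMap.mul' k H
          ∘ₗ map LinearMap.id (HopfAlgebra.antipode k : H →ₗ[k] H)
          ∘ₗ (TensorProduct.comm k H H).toLinearMap)
    ∘ₗ (TensorProduct.assoc k H H H).toLinearMap
    ∘ₗ map (comul : H →ₗ[k] H ⊗[k] H) d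

theorem adjointComp_tmul (d : A →ₗ[k] H) (h : H) (a : A) :
    adjointComp k d (h ⊗ₜ a) =
      ∑ i ∈ (ℛ k h).index, (ℛ k h).left i * (d a * HopfAlgebra.antipode k ((ℛ k h).right i)) := by
  simp only [adjointComp, LinearMap.comp_apply, map_tmul, ← (ℛ k h).eq]
  simp [sum_tmul]

variable [Coalgebra k A]

theorem map_adjointComp_comp_comul (act : H ⊗[k] A →ₗ[k] N) (d : A →ₗ[k] H) :
    map (adjointComp k d) act ∘ₗ comul
      = map (LinearMap.mul' k H) LinearMap.id
        ∘ₗ (TensorProduct.assoc k H H N).symm.toLinearMap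
        ∘ₗ map (LinearMap.mul' k H ∘ₗ map LinearMap.id d)
            (map (HopfAlgebra.antipode k : H →ₗ[k] H) act
              ∘ₗ (TensorProduct.assoc k H H A).toLinearMap)
        ∘ₗ (tensorTensorTensorComm k H (H ⊗[k] H) A A).toLinearMap
        ∘ₗ map (map LinearMap.id (comul : H →ₗ[k] H ⊗[k] H) ∘ₗ comul) comul := by
  rw [← LinearMap.lTensor_def H (comul : H →ₗ[k] H ⊗[k] H), ← coassoc,
    ← LinearMap.id_comp (comul : A →ₗ[k] A ⊗[k] A)]
  change (map (adjointComp k d) act ∘ₗ (tensorTensorTensorComm k H H A A).toLinearMap)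
    ∘ₗ map comul comul = _
  simp only [← LinearMap.comp_assoc, TensorProduct.map_comp]
  refine congrArg (fun F : (H ⊗[k] H) ⊗[k] (A ⊗[k] A) →ₗ[k] H ⊗[k] N => F ∘ₗ map comul comul) ?_
  ext h₁ h₂ a₁ a₂
  simp only [LinearMap.comp_apply, AlgebraTensorModule.curry_apply, curry_apply,
    LinearMap.coe_restrictScalars, LinearEquiv.coe_coe, map_tmul, LinearMap.rTensor_tmul,
    ← (ℛ k h₁).eq, sum_tmul, map_sum, adjointComp_tmul, tensorTensorTensorComm_tmul]
  simp [mul_assoc]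

end Adjoint

theorem statement15 (act : H ⊗[k] A →ₗ[k] A) (d : A →ₗ[k] H)
    (hpcm : HopfPrecrossedModule k A H act d) :
    (map (d ∘ₗ act) act
        ∘ₗ (tensorTensorTensorComm k H H A A).toLinearMap
        ∘ₗ map (Coalgebra.comul : H →ₗ[k] H ⊗[k] H) (Coalgebra.comul : A →ₗ[k] A ⊗[k] A)
      = map (LinearMap.mul' k H) LinearMap.id
        ∘ₗ (TensorProduct.assoc k H H A).symm.toLinearMap
        ∘ₗ map (LinearMap.mul' k H ∘ₗ map LinearMap.id d)
            (map (HopfAlgebra.antipode (R := k) : H →ₗ[k] H) act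
              ∘ₗ (TensorProduct.assoc k H H A).toLinearMap)
        ∘ₗ (tensorTensorTensorComm k H (H ⊗[k] H) A A).toLinearMap
        ∘ₗ map (map LinearMap.id (Coalgebra.comul : H →ₗ[k] H ⊗[k] H)
              ∘ₗ (Coalgebra.comul : H →ₗ[k] H ⊗[k] H))
            (Coalgebra.comul : A →ₗ[k] A ⊗[k] A))
    ↔ (d ∘ₗ act = LinearMap.mul' k H
        ∘ₗ map LinearMap.id (LinearMap.mul' k H
              ∘ₗ map LinearMap.id (HopfAlgebra.antipode (R := k) : H →ₗ[k] H)
              ∘ₗ (TensorProduct.comm k H H).toLinearMap)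
        ∘ₗ (TensorProduct.assoc k H H H).toLinearMap
        ∘ₗ map (Coalgebra.comul : H →ₗ[k] H ⊗[k] H) d) := by
  have act_counit : counit ∘ₗ act = counit := by
    ext h a
    simp [hpcm.act_counit, mul_comm]
  rw [← map_adjointComp_comp_comul]
  exact (map_comp_comul_injective act_counit).eq_iff
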